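/- arXiv:1707.06129 — 2 statements merged into one kernel-verified Lean document; each statement's English description precedes it below -/
import Mathlib

section
/- Assume Hypotheses 1 and 3. For every compact set K ⊂ ℝ∖{0} there exist constants c_K > 0 and c'_K > 0 such that for every n ≥ 1, sup_{t∈K} ‖P_tⁿ‖ ≤ c_K·e^{−c'_K·n}, where ‖·‖ is the operator norm induced by the sup norm on complex-valued functions on 𝕏. -/
open Finset Filter Real Topology MeasureTheory

namespace CLLT

variable {X : Type*}

/-- Product of the transition weights along a path. -/
noncomputable def wt (P : X → X → ℝ) : X → List X → ℝ
  | _, [] => 1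
  | x, y :: ys => P x y * wt P y ys

/-- Extension of a finite path `X₁, …, Xₙ` to a trajectory `ℕ → X` with `X₀ = x`
(values beyond time `n` are irrelevant and set to `x`). -/
def pathExt (x : X) {n : ℕ} (path : Fin n → X) : ℕ → X := fun k =>
  if h : 1 ≤ k ∧ k ≤ n then path ⟨k - 1, by omega⟩ else x

/-- Expectation `𝔼_x (F (X₀, X₁, …))` of a functional of the first `n` steps of the
Markov chain with transition kernel `P` started at `X₀ = x`. -/
noncomputable def Ex [Fintype X] (P : X → X → ℝ) (x : X) (n : ℕ)
    (F : (ℕ → X) → ℝ) : ℝ :=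
  ∑ path : Fin n → X, wt P x (List.ofFn path) * F (pathExt x path)

open Classical in
/-- Real-valued indicator of a proposition. -/
noncomputable def ind (p : Prop) : ℝ := if p then 1 else 0

/-- Partial sum `S_k = f(X₁) + ⋯ + f(X_k)` along a trajectory. -/
noncomputable def Spath (f : X → ℝ) (ω : ℕ → X) (k : ℕ) : ℝ :=
  ∑ i ∈ Finset.Icc 1 k, f (ω i)

/-- The event `τ_y > n`, i.e. `y + S_k > 0` for all `k = 1, …, n`. -/
def survives (f : X → ℝ) (y : ℝ) (n : ℕ) (ω : ℕ → X) : Prop :=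
  ∀ k ∈ Finset.Icc 1 n, 0 < y + Spath f ω k

/-- `n`-step transition kernel. -/
noncomputable def kpow [Fintype X] [DecidableEq X] (P : X → X → ℝ) : ℕ → X → X → ℝ
  | 0 => fun x x' => if x = x' then 1 else 0
  | n + 1 => fun x x' => ∑ y, P x y * kpow P n y x'

/-- Transition operator acting on functions. -/
noncomputable def Pop [Fintype X] (P : X → X → ℝ) (g : X → ℝ) (x : X) : ℝ :=
  ∑ x', P x x' * g x'

/-- Asymptotic variance `σ² = ν(f²) + 2 ∑_{n ≥ 1} ν(f ⬝ Pⁿ f)`. -/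
noncomputable def sigma2 [Fintype X] (P : X → X → ℝ) (ν f : X → ℝ) : ℝ :=
  (∑ x, f x ^ 2 * ν x) + 2 * ∑' n : ℕ, ∑ x, f x * ((Pop P)^[n + 1] f) x * ν x

/-- Hypothesis 1 (primitivity). -/
def Primitive [Fintype X] [DecidableEq X] (P : X → X → ℝ) : Prop :=
  ∃ k₀ : ℕ, 1 ≤ k₀ ∧ ∀ x x', 0 < kpow P k₀ x x'

/-- Hypothesis 3 (non-lattice condition). -/
def NonLattice [Fintype X] (P : X → X → ℝ) (f : X → ℝ) : Prop :=
  ∀ θ a : ℝ, ∃ (n : ℕ) (g : Fin (n + 1) → X),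
    (0 < ∏ i : Fin (n + 1), P (g i) (g (i + 1))) ∧
    ∀ m : ℤ, (∑ i, f (g i)) - (n + 1 : ℝ) * θ ≠ a * (m : ℝ)

/-- `P` is a stochastic matrix and `ν` is a positive invariant probability for it. -/
structure IsStochastic [Fintype X] (P : X → X → ℝ) (ν : X → ℝ) : Prop where
  nonneg : ∀ x x', 0 ≤ P x x'
  rowSum : ∀ x, ∑ x', P x x' = 1
  nuPos : ∀ x, 0 < ν x
  nuSum : ∑ x, ν x = 1
  nuInv : ∀ x', ∑ x, ν x * P x x' = ν x'

/-- Dual kernel `P*(x, x') = ν(x') P(x', x) / ν(x)`. -/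
noncomputable def dualK (P : X → X → ℝ) (ν : X → ℝ) (x x' : X) : ℝ :=
  ν x' * P x' x / ν x

/-- Sup norm of a function on a finite set. -/
noncomputable def supN [Fintype X] [Nonempty X] (ψ : X → ℝ) : ℝ := ⨆ x, |ψ x|

/-- Rayleigh density `φ₊(t) = t e^{-t²/2} 𝟙_{t ≥ 0}`. -/
noncomputable def rayleigh (t : ℝ) : ℝ := if 0 ≤ t then t * Real.exp (-t ^ 2 / 2) else 0

/-- Centred normal density with standard deviation `s`. -/
noncomputable def gauss (s u : ℝ) : ℝ :=
  Real.exp (-u ^ 2 / (2 * s ^ 2)) / (s * Real.sqrt (2 * π))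

/-- Perturbed transition operator `P_t`, as a complex matrix. -/
noncomputable def Pmat [Fintype X] (P : X → X → ℝ) (f : X → ℝ) (t : ℝ) : Matrix X X ℂ :=
  Matrix.of fun x x' => (P x x' : ℂ) * Complex.exp (Complex.I * (t : ℂ) * (f x' : ℂ))

/-- A complex matrix viewed as a continuous linear operator on `X → ℂ`
(equipped with the sup norm). -/
noncomputable def toCLM [Fintype X] (M : Matrix X X ℂ) : (X → ℂ) →L[ℂ] (X → ℂ) :=
  LinearMap.toContinuousLinearMap M.mulVecLin

/-- Fourier transform `ĥ(t) = ∫ e^{-i t u} h(u) du`. -/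
noncomputable def FT (h : ℝ → ℝ) (t : ℝ) : ℂ :=
  ∫ u : ℝ, Complex.exp (-(Complex.I * (t : ℂ) * (u : ℂ))) * (h u : ℂ)

/-- Convolution `(g ∗ k)(u) = ∫ g(v) k(u - v) dv`. -/
noncomputable def convR (g k : ℝ → ℝ) (u : ℝ) : ℝ := ∫ v : ℝ, g v * k (u - v)

/-- Stone's kernel `κ`. -/
noncomputable def kapp (u : ℝ) : ℝ :=
  if u = 0 then 1 / (2 * π) else (Real.sin (u / 2) / (u / 2)) ^ 2 / (2 * π)

/-- Scaled kernel `κ_δ(u) = κ(u/δ)/δ`. -/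
noncomputable def kappD (δ u : ℝ) : ℝ := kapp (u / δ) / δ

/-- Upper regularisation `h̄_ε(u) = sup_{v ∈ [u-ε, u+ε]} h(v)`. -/
noncomputable def upReg (h : ℝ → ℝ) (ε u : ℝ) : ℝ := sSup (h '' Set.Icc (u - ε) (u + ε))

/-- Lower regularisation `ẖ_ε(u) = inf_{v ∈ [u-ε, u+ε]} h(v)`. -/
noncomputable def loReg (h : ℝ → ℝ) (ε u : ℝ) : ℝ := sInf (h '' Set.Icc (u - ε) (u + ε))

/-- The class `𝓗_ε`: non-negative, locally bounded, with `h`, `h̄_ε`, `ẖ_ε`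
measurable and Lebesgue integrable. -/
def MemH (ε : ℝ) (h : ℝ → ℝ) : Prop :=
  (∀ u, 0 ≤ h u) ∧ (∀ K : Set ℝ, IsCompact K → BddAbove (h '' K)) ∧
  Measurable h ∧ Measurable (upReg h ε) ∧ Measurable (loReg h ε) ∧
  Integrable h ∧ Integrable (upReg h ε) ∧ Integrable (loReg h ε)

/-!
For `t ≠ 0` the operator `P_t` has norm at most `1` and no eigenvalue of modulus one. Indeed, for
such an eigenvector `v` the function `|v|` is `P`-subharmonic, hence constant by primitivity;
strict convexity of `ℂ` then forces `e^{itf(x')} v(x') = λ v(x)` along every edge of `P`, and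
multiplying these relations around a cycle contradicts the non-lattice condition. So the
spectral radius of `P_t` is `< 1` and, by Gelfand's formula, some power `P_t^m` has norm `< 1`.
This condition is open in `t`, so on the compact set `K` finitely many exponents `m ≤ M` and a
single bound `‖P_t^m‖ ≤ ρ < 1` suffice, whence `‖P_t^n‖ ≤ ρ^⌊n/M⌋`.
-/

theorem pow_div_le_inv_mul_exp {r : ℝ} (hr0 : 0 < r) (hr1 : r < 1) (M n : ℕ) :
    r ^ (n / M) ≤ r⁻¹ * exp (-(-log r / M) * n) := by
  have hfloor : (n : ℝ) / M - 1 ≤ (n / M : ℕ) := by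
    rw [← Nat.floor_div_eq_div (K := ℝ)]
    exact (Nat.sub_one_lt_floor _).le
  calc r ^ (n / M) = r ^ ((n / M : ℕ) : ℝ) := (rpow_natCast r _).symm
    _ ≤ r ^ ((n : ℝ) / M - 1) := rpow_le_rpow_of_exponent_ge hr0 hr1.le hfloor
    _ = r⁻¹ * exp (-(-log r / M) * n) := by
        rw [rpow_sub hr0, rpow_one, rpow_def_of_pos hr0, div_eq_inv_mul]
        ring_nf

section NormedRing

variable {R : Type*} [NormedRing R]

theorem _root_.IsCompact.exists_uniform_pow_norm_lt {T : Type*} [TopologicalSpace T]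
    {F : T → R} (hF : Continuous F) {K : Set T} (hK : IsCompact K)
    (hlt : ∀ t ∈ K, ∃ m, 0 < m ∧ ‖F t ^ m‖ < 1) :
    ∃ M : ℕ, ∃ ρ : ℝ, 0 < ρ ∧ ρ < 1 ∧ ∀ t ∈ K, ∃ m, 0 < m ∧ m ≤ M ∧ ‖F t ^ m‖ < ρ := by
  -- The thresholds `ρ M` increase to `1`, which makes the sets `V M` a directed open cover of `K`.
  set ρ : ℕ → ℝ := fun M => 1 - 1 / (M + 2) with hρ
  have hρ_mono : Monotone ρ := fun M M' h => by
    simp only [hρ]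
    gcongr
  set V : ℕ → Set T := fun M => ⋃ m ∈ Finset.Icc 1 M, {t | ‖F t ^ m‖ < ρ M}
  have hV_open : ∀ M, IsOpen (V M) := fun M =>
    isOpen_biUnion fun m _ => isOpen_lt (hF.pow m).norm continuous_const
  have hV_mono : Monotone V := fun M M' h => by
    refine Set.biUnion_mono (fun m hm => ?_) fun m _ t ht => ?_
    · simp only [Finset.coe_Icc, Set.mem_Icc] at hm ⊢
      omega
    · exact lt_of_lt_of_le ht (hρ_mono h)
  have hV_cover : K ⊆ ⋃ M, V M := by
    intro t ht
    obtain ⟨m, hm, htm⟩ := hlt t ht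
    obtain ⟨N, hN⟩ := exists_nat_one_div_lt (sub_pos.mpr htm)
    refine Set.mem_iUnion.mpr ⟨max m N, Set.mem_biUnion (x := m) ?_ ?_⟩
    · simp only [Finset.coe_Icc, Set.mem_Icc]
      omega
    · have : 1 / ((max m N : ℕ) + 2 : ℝ) ≤ 1 / (N + 1) := by
        gcongr
        · exact_mod_cast le_max_right m N
        · norm_num
      show ‖F t ^ m‖ < 1 - 1 / ((max m N : ℕ) + 2 : ℝ)
      linarith
  obtain ⟨M, hKM⟩ := hK.elim_directed_cover V hV_open hV_cover hV_mono.directed_le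
  refine ⟨M, ρ M, ?_, ?_, fun t ht => ?_⟩
  · simp only [hρ]
    rw [sub_pos, div_lt_one (by positivity)]
    linarith
  · simp only [hρ]
    linarith [show (0 : ℝ) < 1 / (M + 2) by positivity]
  · obtain ⟨m, hm, htm⟩ := Set.mem_iUnion₂.mp (hKM ht)
    simp only [Finset.mem_Icc] at hm
    exact ⟨m, hm.1, hm.2, htm⟩

variable [NormOneClass R]

theorem norm_pow_le_pow_div {a : R} (ha : ‖a‖ ≤ 1) {m M : ℕ} (hm : 0 < m) (hmM : m ≤ M)
    {r : ℝ} (hr : r ≤ 1) (ham : ‖a ^ m‖ ≤ r) (n : ℕ) : ‖a ^ n‖ ≤ r ^ (n / M) := by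
  have hr0 : 0 ≤ r := (norm_nonneg _).trans ham
  calc ‖a ^ n‖ = ‖(a ^ m) ^ (n / m) * a ^ (n % m)‖ := by
        rw [← pow_mul, ← pow_add, Nat.div_add_mod]
    _ ≤ ‖(a ^ m) ^ (n / m)‖ * ‖a ^ (n % m)‖ := norm_mul_le _ _
    _ ≤ r ^ (n / m) * 1 := by
        gcongr
        · exact (norm_pow_le _ _).trans (pow_le_pow_left₀ (norm_nonneg _) ham _)
        · exact (norm_pow_le _ _).trans (pow_le_one₀ (norm_nonneg _) ha)
    _ ≤ r ^ (n / M) := by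
        rw [mul_one]
        exact pow_le_pow_of_le_one hr0 hr (Nat.div_le_div_left hmM hm)

theorem _root_.IsCompact.exists_exp_decay {T : Type*} [TopologicalSpace T] {F : T → R}
    (hF : Continuous F) {K : Set T} (hK : IsCompact K) (hle : ∀ t ∈ K, ‖F t‖ ≤ 1)
    (hlt : ∀ t ∈ K, ∃ m, 0 < m ∧ ‖F t ^ m‖ < 1) :
    ∃ c > 0, ∃ c' > 0, ∀ n : ℕ, ∀ t ∈ K, ‖F t ^ n‖ ≤ c * exp (-c' * n) := by
  obtain ⟨M, ρ, hρ0, hρ1, hρ⟩ := hK.exists_uniform_pow_norm_lt hF hlt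
  refine ⟨ρ⁻¹, inv_pos.mpr hρ0, -log ρ / (M + 1 : ℕ),
    div_pos (neg_pos.mpr (log_neg hρ0 hρ1)) (by positivity), fun n t ht => ?_⟩
  obtain ⟨m, hm, hmM, htm⟩ := hρ t ht
  calc ‖F t ^ n‖ ≤ ρ ^ (n / (M + 1)) :=
        norm_pow_le_pow_div (hle t ht) hm (hmM.trans M.le_succ) hρ1.le htm.le n
    _ ≤ _ := pow_div_le_inv_mul_exp hρ0 hρ1 _ n

end NormedRing

theorem exists_pow_norm_lt_one_of_spectralRadius_lt_one {A : Type*} [NormedRing A]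
    [NormedAlgebra ℂ A] [CompleteSpace A] {a : A} (ha : spectralRadius ℂ a < 1) :
    ∃ m, 0 < m ∧ ‖a ^ m‖ < 1 := by
  obtain ⟨m, hm, ham⟩ := ((eventually_gt_atTop 0).and
    ((spectrum.pow_norm_pow_one_div_tendsto_nhds_spectralRadius a).eventually_lt_const ha)).exists
  refine ⟨m, hm, ?_⟩
  rwa [ENNReal.ofReal_lt_one, rpow_lt_one_iff' (norm_nonneg _) (by positivity)] at ham

theorem eq_sum_smul_of_norm_sum_smul_eq {ι V : Type*} [NormedAddCommGroup V] [NormedSpace ℝ V]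
    [StrictConvexSpace ℝ V] {s : Finset ι} {w : ι → ℝ} {p : ι → V} {r : ℝ}
    (hw0 : ∀ i ∈ s, 0 ≤ w i) (hw1 : ∑ i ∈ s, w i = 1) (hz : ∀ i ∈ s, ‖p i‖ ≤ r)
    (hsum : ‖∑ i ∈ s, w i • p i‖ = r) {i : ι} (hi : i ∈ s) (hwi : w i ≠ 0) :
    p i = ∑ j ∈ s, w j • p j := by
  have heq : ∀ j ∈ s, w j ≠ 0 → p j = p i := fun j hj hwj => by
    by_contra hne
    exact (norm_sum_lt_of_strictConvexSpace hw0 hw1 hj hi hne hwj hwi hz).ne hsum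
  calc p i = ∑ j ∈ s, w j • p i := by rw [← Finset.sum_smul, hw1, one_smul]
    _ = ∑ j ∈ s, w j • p j := Finset.sum_congr rfl fun j hj => by
        rcases eq_or_ne (w j) 0 with hwj | hwj
        · simp [hwj]
        · rw [heq j hj hwj]

theorem prod_eq_pow_of_mul_succ_eq {G₀ ι : Type*} [CommGroupWithZero G₀] {n : ℕ}
    {γ : Fin (n + 1) → ι} {e g : ι → G₀} {z : G₀} (hg : ∀ i, g (γ i) ≠ 0)
    (hstep : ∀ i, e (γ (i + 1)) * g (γ (i + 1)) = z * g (γ i)) :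
    ∏ i, e (γ i) = z ^ (n + 1) := by
  have hshift : ∀ h : ι → G₀, ∏ i, h (γ (i + 1)) = ∏ i, h (γ i) := fun h =>
    Fintype.prod_equiv (Equiv.addRight 1) _ _ fun _ => rfl
  apply mul_right_cancel₀ (Finset.prod_ne_zero_iff.mpr fun i _ => hg i)
  calc (∏ i, e (γ i)) * ∏ i, g (γ i) = ∏ i, e (γ (i + 1)) * g (γ (i + 1)) := by
        rw [Finset.prod_mul_distrib, hshift e, hshift g]
    _ = z ^ (n + 1) * ∏ i, g (γ i) := by
        simp_rw [hstep, Finset.prod_mul_distrib, Finset.prod_const, Finset.card_univ,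
          Fintype.card_fin]

section Markov

variable {X : Type*} [Fintype X] [DecidableEq X] {P : X → X → ℝ}

theorem sum_kpow_eq_one (hP1 : ∀ x, ∑ x', P x x' = 1) (n : ℕ) (x : X) :
    ∑ x', kpow P n x x' = 1 := by
  induction n generalizing x with
  | zero => simp [kpow]
  | succ n ih =>
      simp only [kpow]
      rw [Finset.sum_comm]
      simp_rw [← Finset.mul_sum, ih, mul_one, hP1]

theorem le_sum_kpow_mul_of_le_Pop (hP0 : ∀ x x', 0 ≤ P x x') {h : X → ℝ} (hh : h ≤ Pop P h)
    (n : ℕ) (x : X) : h x ≤ ∑ x', kpow P n x x' * h x' := by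
  induction n generalizing x with
  | zero => simp [kpow]
  | succ n ih =>
      calc h x ≤ ∑ y, P x y * h y := hh x
        _ ≤ ∑ y, P x y * ∑ x', kpow P n y x' * h x' :=
            Finset.sum_le_sum fun y _ => mul_le_mul_of_nonneg_left (ih y) (hP0 x y)
        _ = ∑ x', kpow P (n + 1) x x' * h x' := by
            simp only [kpow, Finset.sum_mul, Finset.mul_sum, mul_assoc]
            rw [Finset.sum_comm]

theorem Primitive.eq_of_le_Pop (hP0 : ∀ x x', 0 ≤ P x x') (hP1 : ∀ x, ∑ x', P x x' = 1)
    (hprim : Primitive P) {h : X → ℝ} (hh : h ≤ Pop P h) (x y : X) : h x = h y := by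
  obtain ⟨k, -, hk⟩ := hprim
  have : Nonempty X := ⟨x⟩
  obtain ⟨x₀, hx₀⟩ := Finite.exists_max h
  have hnonneg : ∀ x' ∈ Finset.univ, 0 ≤ kpow P k x₀ x' * (h x₀ - h x') :=
    fun x' _ => mul_nonneg (hk x₀ x').le (sub_nonneg.mpr (hx₀ x'))
  have hsum : ∑ x', kpow P k x₀ x' * (h x₀ - h x') = 0 := by
    refine le_antisymm ?_ (Finset.sum_nonneg hnonneg)
    simp only [mul_sub, Finset.sum_sub_distrib, ← Finset.sum_mul, sum_kpow_eq_one hP1, one_mul]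
    linarith [le_sum_kpow_mul_of_le_Pop hP0 hh k x₀]
  have hmax : ∀ x', h x' = h x₀ := fun x' => by
    have := (Finset.sum_eq_zero_iff_of_nonneg hnonneg).mp hsum x' (Finset.mem_univ _)
    rcases mul_eq_zero.mp this with h0 | h0
    · exact absurd h0 (hk x₀ x').ne'
    · linarith
  rw [hmax x, hmax y]

end Markov

section PerturbedOperator

open Complex Matrix
open scoped Matrix.Norms.Operator

variable {X : Type*} [Fintype X] {P : X → X → ℝ} {f : X → ℝ}

theorem norm_toCLM [DecidableEq X] (M : Matrix X X ℂ) : ‖toCLM M‖ = ‖M‖ :=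
  (linfty_opNorm_eq_opNorm M).symm

theorem continuous_Pmat (P : X → X → ℝ) (f : X → ℝ) : Continuous (Pmat P f) :=
  continuous_matrix fun _ _ => continuous_const.mul <| continuous_exp.comp <|
    (continuous_const.mul continuous_ofReal).mul continuous_const

theorem norm_exp_I_mul_ofReal_mul_ofReal (t a : ℝ) : ‖exp (I * t * a)‖ = 1 := by
  rw [mul_assoc, ← ofReal_mul, norm_exp_I_mul_ofReal]

theorem norm_Pmat_apply (hP0 : ∀ x x', 0 ≤ P x x') (t : ℝ) (x x' : X) :
    ‖Pmat P f t x x'‖ = P x x' := by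
  rw [Pmat, of_apply, norm_mul, norm_exp_I_mul_ofReal_mul_ofReal, mul_one, norm_real,
    Real.norm_of_nonneg (hP0 x x')]

theorem norm_Pmat_le_one (hP0 : ∀ x x', 0 ≤ P x x') (hP1 : ∀ x, ∑ x', P x x' = 1) (t : ℝ) :
    ‖Pmat P f t‖ ≤ 1 := by
  rw [linfty_opNorm_def]
  refine NNReal.coe_le_one.mpr <| Finset.sup_le fun x _ => le_of_eq <| NNReal.eq ?_
  push_cast [coe_nnnorm, norm_Pmat_apply hP0]
  exact hP1 x

theorem Pmat_mulVec_apply (t : ℝ) (v : X → ℂ) (x : X) :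
    (Pmat P f t *ᵥ v) x = ∑ x', P x x' • (exp (I * t * f x') * v x') := by
  simp [Pmat, mulVec, dotProduct, mul_assoc]

theorem norm_eigenvector_Pmat_eq [DecidableEq X] (hP0 : ∀ x x', 0 ≤ P x x')
    (hP1 : ∀ x, ∑ x', P x x' = 1) (hprim : Primitive P) {t : ℝ} {z : ℂ} (hz : ‖z‖ = 1)
    {v : X → ℂ} (hv : Pmat P f t *ᵥ v = z • v) (x y : X) : ‖v x‖ = ‖v y‖ := by
  refine hprim.eq_of_le_Pop hP0 hP1 (h := fun x => ‖v x‖) (fun x => ?_) x y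
  calc ‖v x‖ = ‖(Pmat P f t *ᵥ v) x‖ := by rw [hv, Pi.smul_apply, norm_smul, hz, one_mul]
    _ ≤ ∑ x', ‖P x x' • (exp (I * t * f x') * v x')‖ := by
        rw [Pmat_mulVec_apply]; exact norm_sum_le _ _
    _ = Pop P (fun x => ‖v x‖) x := by
        simp only [Pop, norm_smul, norm_mul, norm_exp_I_mul_ofReal_mul_ofReal, one_mul,
          Real.norm_of_nonneg (hP0 x _)]

/-- The eigenvalue equation writes `z * v x` as a convex combination of points of modulus
`‖v x‖`; by strict convexity they all coincide. -/
theorem eigenvector_Pmat_phase (hP0 : ∀ x x', 0 ≤ P x x') (hP1 : ∀ x, ∑ x', P x x' = 1)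
    {t : ℝ} {z : ℂ} (hz : ‖z‖ = 1) {v : X → ℂ} (hv : Pmat P f t *ᵥ v = z • v)
    (hconst : ∀ x y, ‖v x‖ = ‖v y‖) {x x' : X} (hxx' : 0 < P x x') :
    exp (I * t * f x') * v x' = z * v x := by
  have hsum : ∑ y, P x y • (exp (I * t * f y) * v y) = z * v x := by
    rw [← Pmat_mulVec_apply, hv, Pi.smul_apply, smul_eq_mul]
  rw [← hsum]
  refine eq_sum_smul_of_norm_sum_smul_eq (p := fun y => exp (I * t * f y) * v y)
    (fun y _ => hP0 x y) (hP1 x) (r := ‖v x‖)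
    (fun y _ => ?_) ?_ (Finset.mem_univ x') hxx'.ne'
  · rw [norm_mul, norm_exp_I_mul_ofReal_mul_ofReal, one_mul, hconst]
  · rw [hsum, norm_mul, hz, one_mul]

theorem NonLattice.exists_prod_exp_ne_pow (hP0 : ∀ x x', 0 ≤ P x x') (h3 : NonLattice P f)
    {t : ℝ} (ht : t ≠ 0) {z : ℂ} (hz : ‖z‖ = 1) :
    ∃ (n : ℕ) (γ : Fin (n + 1) → X), (∀ i, 0 < P (γ i) (γ (i + 1))) ∧
      ∏ i, exp (I * t * f (γ i)) ≠ z ^ (n + 1) := by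
  obtain ⟨n, γ, hpos, hne⟩ := h3 (arg z / t) (2 * π / t)
  refine ⟨n, γ, fun i => (hP0 _ _).lt_of_ne fun h0 => ?_, fun heq => ?_⟩
  · exact hpos.ne' (Finset.prod_eq_zero (Finset.mem_univ i) h0.symm)
  have hz_exp : z = exp (arg z * I) := by
    simpa [hz] using (norm_mul_exp_arg_mul_I z).symm
  rw [← Complex.exp_sum, hz_exp, ← Complex.exp_nat_mul, exp_eq_exp_iff_exists_int] at heq
  obtain ⟨m, hm⟩ := heq
  apply hne m
  have him := congrArg im hm
  simp only [← Finset.mul_sum, ← ofReal_sum, mul_im, mul_re, I_re, ofReal_re, zero_mul, I_im,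
    ofReal_im, mul_zero, sub_self, one_mul, zero_add, Nat.cast_add, Nat.cast_one, add_im, add_re,
    natCast_re, one_re, mul_one, add_zero, natCast_im, one_im, intCast_re, re_ofNat, im_ofNat,
    sub_zero, intCast_im] at him
  field_simp
  linarith

theorem notMem_spectrum_Pmat_of_norm_eq_one [DecidableEq X] (hP0 : ∀ x x', 0 ≤ P x x')
    (hP1 : ∀ x, ∑ x', P x x' = 1) (h1 : Primitive P) (h3 : NonLattice P f) {t : ℝ}
    (ht : t ≠ 0) {z : ℂ} (hz : ‖z‖ = 1) : z ∉ spectrum ℂ (Pmat P f t) := by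
  intro hmem
  rw [← spectrum_toLin', ← Module.End.hasEigenvalue_iff_mem_spectrum] at hmem
  obtain ⟨v, hv⟩ := hmem.exists_hasEigenvector
  have heig : Pmat P f t *ᵥ v = z • v := by rw [← toLin'_apply]; exact hv.apply_eq_smul
  have hconst := norm_eigenvector_Pmat_eq hP0 hP1 h1 hz heig
  obtain ⟨y, hy⟩ := Function.ne_iff.mp hv.2
  have hv0 : ∀ x, v x ≠ 0 := fun x =>
    norm_ne_zero_iff.mp (hconst x y ▸ norm_ne_zero_iff.mpr hy)
  obtain ⟨n, γ, hpos, hne⟩ := h3.exists_prod_exp_ne_pow hP0 ht hz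
  exact hne <| prod_eq_pow_of_mul_succ_eq (e := fun y => exp (I * t * f y)) (fun i => hv0 (γ i))
    fun i => eigenvector_Pmat_phase hP0 hP1 hz heig hconst (hpos i)

theorem spectralRadius_Pmat_lt_one [DecidableEq X] [Nonempty X] (hP0 : ∀ x x', 0 ≤ P x x')
    (hP1 : ∀ x, ∑ x', P x x' = 1) (h1 : Primitive P) (h3 : NonLattice P f) {t : ℝ}
    (ht : t ≠ 0) : spectralRadius ℂ (Pmat P f t) < 1 := by
  refine spectrum.spectralRadius_lt_of_forall_lt _ fun z hz => ?_
  have hle : ‖z‖ ≤ 1 := (spectrum.norm_le_norm_of_mem hz).trans (norm_Pmat_le_one hP0 hP1 t)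
  exact_mod_cast hle.lt_of_ne fun h => notMem_spectrum_Pmat_of_norm_eq_one hP0 hP1 h1 h3 ht h hz

end PerturbedOperator

/-- Lemma 4.2: exponential decay of the perturbed operator,
uniformly on compact sets away from `0`. -/
theorem perturbed_operator_decay [Fintype X] [DecidableEq X] [Nonempty X]
    (P : X → X → ℝ) (f : X → ℝ)
    (hP0 : ∀ x x', 0 ≤ P x x') (hP1 : ∀ x, ∑ x', P x x' = 1)
    (h1 : Primitive P) (h3 : NonLattice P f) :
    ∀ K : Set ℝ, IsCompact K → (0 : ℝ) ∉ K →
      ∃ c > 0, ∃ c' > 0, ∀ n : ℕ, 1 ≤ n → ∀ t ∈ K,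
        ‖toCLM (Pmat P f t ^ n)‖ ≤ c * Real.exp (-c' * n) := by
  intro K hK hK0
  open scoped Matrix.Norms.Operator in
  obtain ⟨c, hc, c', hc', hdecay⟩ := hK.exists_exp_decay (continuous_Pmat P f)
    (fun t _ => norm_Pmat_le_one hP0 hP1 t) fun t ht =>
      exists_pow_norm_lt_one_of_spectralRadius_lt_one
        (spectralRadius_Pmat_lt_one hP0 hP1 h1 h3 (ne_of_mem_of_not_mem ht hK0))
  exact ⟨c, hc, c', hc', fun n _ t ht => (norm_toCLM _).trans_le (hdecay n t ht)⟩

end CLLT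
end

section
/- Assume Hypothesis 1. The following three statements are equivalent: (1) there exists m ∈ ℝ such that for every orbit x₀,…,x_n (i.e., every finite sequence with P(x₀,x₁)⋯P(x_{n−1},x_n)P(x_n,x₀) > 0), f(x₀)+⋯+f(x_n) = (n+1)·m; (2) there exist m ∈ ℝ and a function h : 𝕏 → ℝ such that for all (x,x') ∈ 𝕏², P(x,x')·f(x') = P(x,x')·(h(x) − h(x') + m); (3) the quantity σ̃² := ν(f²) − ν(f)² + 2·∑_{n≥1} [ ν(f·(Pⁿf)) − ν(f)² ] (a convergent series) is equal to 0. -/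
open Finset Filter Real Topology MeasureTheory

namespace CLLT

variable {X : Type*}

section DegAux
set_option linter.unusedSectionVars false

variable [Fintype X] [DecidableEq X] [Nonempty X]

noncomputable def mxF (g : X → ℝ) : ℝ := Finset.univ.sup' Finset.univ_nonempty g
noncomputable def mnF (g : X → ℝ) : ℝ := Finset.univ.inf' Finset.univ_nonempty g

lemma le_mxF (g : X → ℝ) (x : X) : g x ≤ mxF g := Finset.le_sup' g (Finset.mem_univ x)
lemma mnF_le (g : X → ℝ) (x : X) : mnF g ≤ g x := Finset.inf'_le g (Finset.mem_univ x)
lemma mnF_le_mxF (g : X → ℝ) : mnF g ≤ mxF g :=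
  (mnF_le g (Classical.arbitrary X)).trans (le_mxF g _)

lemma Pop_le_mxF {Q : X → X → ℝ} (hnn : ∀ x x', 0 ≤ Q x x') (hrow : ∀ x, ∑ x', Q x x' = 1)
    (g : X → ℝ) (x : X) : Pop Q g x ≤ mxF g := by
  have h : Pop Q g x ≤ ∑ x', Q x x' * mxF g :=
    Finset.sum_le_sum fun x' _ => mul_le_mul_of_nonneg_left (le_mxF g x') (hnn x x')
  calc Pop Q g x ≤ ∑ x', Q x x' * mxF g := h
    _ = (∑ x', Q x x') * mxF g := by rw [Finset.sum_mul]
    _ = mxF g := by rw [hrow x, one_mul]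

lemma mnF_le_Pop {Q : X → X → ℝ} (hnn : ∀ x x', 0 ≤ Q x x') (hrow : ∀ x, ∑ x', Q x x' = 1)
    (g : X → ℝ) (x : X) : mnF g ≤ Pop Q g x := by
  have h : ∑ x', Q x x' * mnF g ≤ Pop Q g x :=
    Finset.sum_le_sum fun x' _ => mul_le_mul_of_nonneg_left (mnF_le g x') (hnn x x')
  calc mnF g = (∑ x', Q x x') * mnF g := by rw [hrow x, one_mul]
    _ = ∑ x', Q x x' * mnF g := by rw [Finset.sum_mul]
    _ ≤ Pop Q g x := h

lemma doeblin_pt {Q : X → X → ℝ} (hnn : ∀ x x', 0 ≤ Q x x') (hrow : ∀ x, ∑ x', Q x x' = 1)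
    {δ : ℝ} (hδ : ∀ x x', δ ≤ Q x x') (g : X → ℝ) (x : X) :
    Pop Q g x ≤ mxF g - δ * (mxF g - mnF g) := by
  obtain ⟨z, -, hz⟩ := Finset.exists_mem_eq_inf' (Finset.univ_nonempty (α := X)) g
  have hsplit : ∑ x' ∈ Finset.univ.erase z, Q x x' * g x' + Q x z * g z = Pop Q g x :=
    Finset.sum_erase_add _ _ (Finset.mem_univ z)
  have h1 : ∑ x' ∈ Finset.univ.erase z, Q x x' * g x' ≤
      ∑ x' ∈ Finset.univ.erase z, Q x x' * mxF g :=
    Finset.sum_le_sum fun x' _ => mul_le_mul_of_nonneg_left (le_mxF g x') (hnn x x')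
  have h2 : ∑ x' ∈ Finset.univ.erase z, Q x x' = 1 - Q x z := by
    have := Finset.sum_erase_add Finset.univ (fun x' => Q x x') (Finset.mem_univ z)
    rw [hrow x] at this
    linarith
  have h3 : (∑ x' ∈ Finset.univ.erase z, Q x x' * mxF g) = (1 - Q x z) * mxF g := by
    rw [← Finset.sum_mul, h2]
  have hq : δ ≤ Q x z := hδ x z
  have hosc : mnF g ≤ mxF g := mnF_le_mxF g
  have hz' : mnF g = g z := hz
  have hq1 : Q x z ≤ 1 := by
    have := Finset.single_le_sum (f := fun x' => Q x x') (fun i _ => hnn x i) (Finset.mem_univ z)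
    rw [hrow x] at this; exact this
  nlinarith [hsplit, h1, h3, hz']

lemma doeblin_osc {Q : X → X → ℝ} (hnn : ∀ x x', 0 ≤ Q x x') (hrow : ∀ x, ∑ x', Q x x' = 1)
    {δ : ℝ} (hδ : ∀ x x', δ ≤ Q x x') (g : X → ℝ) :
    mxF (Pop Q g) - mnF (Pop Q g) ≤ (1 - δ) * (mxF g - mnF g) := by
  have h1 : mxF (Pop Q g) ≤ mxF g - δ * (mxF g - mnF g) :=
    Finset.sup'_le _ _ fun x _ => doeblin_pt hnn hrow hδ g x
  have h2 : mnF g ≤ mnF (Pop Q g) :=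
    Finset.le_inf' _ _ fun x _ => mnF_le_Pop hnn hrow g x
  nlinarith

lemma kpow_nonneg {P : X → X → ℝ} (hnn : ∀ x x', 0 ≤ P x x') :
    ∀ k x y, 0 ≤ kpow P k x y := by
  intro k
  induction k with
  | zero => intro x y; simp only [kpow]; positivity
  | succ k ih =>
      intro x y
      exact Finset.sum_nonneg fun z _ => mul_nonneg (hnn x z) (ih z y)

lemma kpow_row {P : X → X → ℝ} (hrow : ∀ x, ∑ x', P x x' = 1) :
    ∀ k x, ∑ y, kpow P k x y = 1 := by
  intro k
  induction k with
  | zero => intro x; simp [kpow]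
  | succ k ih =>
      intro x
      rw [show (∑ y, kpow P (k+1) x y) = ∑ y, ∑ z, P x z * kpow P k z y from rfl,
        Finset.sum_comm]
      have : ∀ z, ∑ y, P x z * kpow P k z y = P x z := by
        intro z; rw [← Finset.mul_sum, ih z, mul_one]
      rw [Finset.sum_congr rfl fun z _ => this z, hrow x]

lemma Pop_iterate (P : X → X → ℝ) (g : X → ℝ) :
    ∀ k, (Pop P)^[k] g = Pop (kpow P k) g := by
  intro k
  induction k with
  | zero =>
      funext x
      simp [Pop, kpow, ite_mul, Finset.sum_ite_eq]
  | succ k ih =>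
      funext x
      rw [Function.iterate_succ_apply', ih]
      show ∑ y, P x y * (∑ x', kpow P k y x' * g x') = ∑ x', (∑ y, P x y * kpow P k y x') * g x'
      calc ∑ y, P x y * (∑ x', kpow P k y x' * g x')
          = ∑ y, ∑ x', P x y * kpow P k y x' * g x' := by
            refine Finset.sum_congr rfl fun y _ => ?_
            rw [Finset.mul_sum]
            exact Finset.sum_congr rfl fun x' _ => by ring
        _ = ∑ x', ∑ y, P x y * kpow P k y x' * g x' := Finset.sum_comm
        _ = ∑ x', (∑ y, P x y * kpow P k y x') * g x' := by
            exact Finset.sum_congr rfl fun x' _ => by rw [Finset.sum_mul]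

lemma nu_Pop {P : X → X → ℝ} {ν : X → ℝ} (hS : IsStochastic P ν) (g : X → ℝ) :
    ∑ x, Pop P g x * ν x = ∑ x, g x * ν x := by
  have h : ∀ x, Pop P g x * ν x = ∑ x', g x' * (ν x * P x x') := by
    intro x
    rw [show Pop P g x * ν x = ∑ x', P x x' * g x' * ν x from by rw [Pop, Finset.sum_mul]]
    exact Finset.sum_congr rfl fun x' _ => by ring
  rw [Finset.sum_congr rfl fun x _ => h x, Finset.sum_comm]
  refine Finset.sum_congr rfl fun x' _ => ?_
  rw [← Finset.mul_sum, hS.nuInv x']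

lemma nu_iter {P : X → X → ℝ} {ν : X → ℝ} (hS : IsStochastic P ν) (g : X → ℝ) :
    ∀ k, ∑ x, ((Pop P)^[k] g) x * ν x = ∑ x, g x * ν x := by
  intro k
  induction k with
  | zero => simp
  | succ k ih =>
      calc ∑ x, ((Pop P)^[k+1] g) x * ν x = ∑ x, Pop P ((Pop P)^[k] g) x * ν x := by
            rw [Function.iterate_succ_apply']
        _ = ∑ x, ((Pop P)^[k] g) x * ν x := nu_Pop hS _
        _ = ∑ x, g x * ν x := ih

lemma abs_le_osc {ν : X → ℝ} (hpos : ∀ x, 0 < ν x) (hsum : ∑ x, ν x = 1) {g : X → ℝ}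
    (hg : ∑ x, g x * ν x = 0) (x : X) : |g x| ≤ mxF g - mnF g := by
  have hmn : mnF g ≤ 0 := by
    have : mnF g = ∑ x, mnF g * ν x := by rw [← Finset.mul_sum, hsum, mul_one]
    rw [this, ← hg]
    exact Finset.sum_le_sum fun y _ => mul_le_mul_of_nonneg_right (mnF_le g y) (hpos y).le
  have hmx : 0 ≤ mxF g := by
    have : mxF g = ∑ x, mxF g * ν x := by rw [← Finset.mul_sum, hsum, mul_one]
    rw [this, ← hg]
    exact Finset.sum_le_sum fun y _ => mul_le_mul_of_nonneg_right (le_mxF g y) (hpos y).le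
  rw [abs_le]
  constructor
  · linarith [mnF_le g x]
  · linarith [le_mxF g x]

lemma exists_summable_bound {P : X → X → ℝ} {ν : X → ℝ} (hS : IsStochastic P ν)
    (h1 : Primitive P) (g : X → ℝ) (hg : ∑ x, g x * ν x = 0) :
    ∃ a : ℕ → ℝ, Summable a ∧ ∀ n x, |((Pop P)^[n] g) x| ≤ a n := by
  obtain ⟨k₀, hk₁, hpos⟩ := h1
  set Q : X → X → ℝ := kpow P k₀ with hQ
  have hQnn : ∀ x x', 0 ≤ Q x x' := fun x x' => (hpos x x').le
  have hQrow : ∀ x, ∑ x', Q x x' = 1 := fun x => kpow_row hS.rowSum k₀ x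
  set δ : ℝ := Finset.univ.inf' (Finset.univ_nonempty) (fun p : X × X => Q p.1 p.2) with hδdef
  have hδpos : 0 < δ := Finset.lt_inf'_iff _ |>.mpr fun p _ => hpos p.1 p.2
  have hδle : ∀ x x', δ ≤ Q x x' := fun x x' =>
    Finset.inf'_le _ (Finset.mem_univ ((x, x') : X × X))
  set r : ℝ := max (1 - δ) 2⁻¹ with hrdef
  have hr0 : (0:ℝ) < r := lt_max_of_lt_right (by norm_num)
  have hδ1 : δ ≤ 1 := by
    have x0 := Classical.arbitrary X
    have h := Finset.single_le_sum (f := fun x' => Q x0 x') (fun i _ => hQnn x0 i)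
      (Finset.mem_univ x0)
    rw [hQrow x0] at h
    exact (hδle x0 x0).trans h
  have hr1 : r < 1 := max_lt (by linarith) (by norm_num)
  set a : ℕ → ℝ := fun n => mxF ((Pop P)^[n] g) - mnF ((Pop P)^[n] g) with hadef
  have ha0 : ∀ n, 0 ≤ a n := fun n => sub_nonneg.mpr (mnF_le_mxF _)
  have hamono : ∀ n, a (n + 1) ≤ a n := by
    intro n
    have heq : (Pop P)^[n+1] g = Pop P ((Pop P)^[n] g) := Function.iterate_succ_apply' _ _ _
    have h1' : mxF ((Pop P)^[n+1] g) ≤ mxF ((Pop P)^[n] g) := by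
      rw [heq]
      exact Finset.sup'_le _ _ fun x _ => Pop_le_mxF hS.nonneg hS.rowSum _ x
    have h2' : mnF ((Pop P)^[n] g) ≤ mnF ((Pop P)^[n+1] g) := by
      rw [heq]
      exact Finset.le_inf' _ _ fun x _ => mnF_le_Pop hS.nonneg hS.rowSum _ x
    simp only [hadef]
    linarith
  have hanti : Antitone a := antitone_nat_of_succ_le hamono
  have hacon : ∀ n, a (n + k₀) ≤ r * a n := by
    intro n
    have heq : (Pop P)^[n + k₀] g = Pop Q ((Pop P)^[n] g) := by
      rw [add_comm, Function.iterate_add_apply, Pop_iterate]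
    have h := doeblin_osc hQnn hQrow hδle ((Pop P)^[n] g)
    rw [← heq] at h
    have : (1 - δ) * a n ≤ r * a n :=
      mul_le_mul_of_nonneg_right (le_max_left _ _) (ha0 n)
    calc a (n + k₀) ≤ (1 - δ) * a n := h
      _ ≤ r * a n := this
  have hdiv : ∀ n, a n ≤ a 0 * r ^ (n / k₀) := by
    intro n
    induction n using Nat.strong_induction_on with
    | _ n ih =>
      by_cases hlt : n < k₀
      · rw [Nat.div_eq_of_lt hlt, pow_zero, mul_one]
        exact hanti (Nat.zero_le n)
      · push_neg at hlt
        have h2 := hacon (n - k₀)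
        rw [Nat.sub_add_cancel hlt] at h2
        have h3 := ih (n - k₀) (by omega)
        rw [Nat.div_eq_sub_div (by omega) hlt, pow_succ]
        calc a n ≤ r * a (n - k₀) := h2
          _ ≤ r * (a 0 * r ^ ((n - k₀) / k₀)) := mul_le_mul_of_nonneg_left h3 hr0.le
          _ = a 0 * (r ^ ((n - k₀) / k₀) * r) := by ring
  set s : ℝ := r ^ ((k₀ : ℝ)⁻¹) with hsdef
  have hk0R : (0:ℝ) < (k₀ : ℝ) := by exact_mod_cast hk₁
  have hs0 : 0 < s := Real.rpow_pos_of_pos hr0 _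
  have hs1 : s < 1 := Real.rpow_lt_one hr0.le hr1 (by positivity)
  have hkey : ∀ n : ℕ, r ^ (n / k₀) ≤ s ^ n / r := by
    intro n
    set q : ℕ := n / k₀ with hqdef
    have hmod : n < (q + 1) * k₀ := by
      have h1 := Nat.div_add_mod n k₀
      have h2 := Nat.mod_lt n (show 0 < k₀ by omega)
      rw [hqdef]
      nlinarith [h1, h2]
    have hcast : (n : ℝ) < ((q : ℝ) + 1) * (k₀ : ℝ) := by exact_mod_cast hmod
    have hexp : (k₀ : ℝ)⁻¹ * n ≤ (q : ℝ) + 1 := by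
      rw [inv_mul_eq_div, div_le_iff₀ hk0R]
      linarith
    have hsn : s ^ n = r ^ ((k₀ : ℝ)⁻¹ * (n : ℝ)) := by
      rw [Real.rpow_mul hr0.le, hsdef, ← Real.rpow_natCast (r ^ ((k₀:ℝ)⁻¹)) n]
    have h5 : r ^ ((q : ℝ) + 1) ≤ r ^ ((k₀ : ℝ)⁻¹ * (n : ℝ)) :=
      Real.rpow_le_rpow_of_exponent_ge hr0 hr1.le hexp
    have h6 : r ^ ((q : ℝ) + 1) = r ^ q * r := by
      rw [Real.rpow_add hr0, Real.rpow_one, Real.rpow_natCast]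
    rw [hsn, le_div_iff₀ hr0, ← h6]
    exact h5
  refine ⟨a, ?_, ?_⟩
  · refine Summable.of_nonneg_of_le ha0 (fun n => ?_)
      (((summable_geometric_of_lt_one hs0.le hs1).mul_left (a 0 / r)))
    calc a n ≤ a 0 * r ^ (n / k₀) := hdiv n
      _ ≤ a 0 * (s ^ n / r) := mul_le_mul_of_nonneg_left (hkey n) (ha0 0)
      _ = a 0 / r * s ^ n := by ring
  · intro n x
    exact abs_le_osc hS.nuPos hS.nuSum (by rw [nu_iter hS g n, hg]) x

lemma harmonic_const {P : X → X → ℝ} {ν : X → ℝ} (hS : IsStochastic P ν)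
    (h1 : Primitive P) {w : X → ℝ} (hw : ∀ x, Pop P w x = w x) (x y : X) : w x = w y := by
  obtain ⟨k₀, hk₁, hpos⟩ := h1
  have hQnn : ∀ x x', 0 ≤ kpow P k₀ x x' := fun x x' => (hpos x x').le
  have hQrow : ∀ x, ∑ x', kpow P k₀ x x' = 1 := fun x => kpow_row hS.rowSum k₀ x
  set δ : ℝ := Finset.univ.inf' (Finset.univ_nonempty) (fun p : X × X => kpow P k₀ p.1 p.2)
  have hδpos : 0 < δ := Finset.lt_inf'_iff _ |>.mpr fun p _ => hpos p.1 p.2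
  have hδle : ∀ x x', δ ≤ kpow P k₀ x x' := fun x x' =>
    Finset.inf'_le _ (Finset.mem_univ ((x, x') : X × X))
  have hwit : ∀ k, (Pop P)^[k] w = w := by
    intro k
    induction k with
    | zero => rfl
    | succ k ih => rw [Function.iterate_succ_apply', ih]; funext z; exact hw z
  have heq : Pop (kpow P k₀) w = w := by rw [← Pop_iterate, hwit k₀]
  have hosc := doeblin_osc hQnn hQrow hδle w
  rw [heq] at hosc
  have hoscnn : 0 ≤ mxF w - mnF w := sub_nonneg.mpr (mnF_le_mxF w)
  have hosc0 : mxF w - mnF w ≤ 0 := by nlinarith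
  have h1' : w x ≤ w y := by
    have := le_mxF w x; have := mnF_le w y; linarith
  have h2' : w y ≤ w x := by
    have := le_mxF w y; have := mnF_le w x; linarith
  linarith

lemma exists_chain {P : X → X → ℝ} (hnn : ∀ x x', 0 ≤ P x x') :
    ∀ (k : ℕ) (x y : X), 0 < kpow P k x y →
    ∃ c : ℕ → X, c 0 = x ∧ c k = y ∧ ∀ i < k, 0 < P (c i) (c (i + 1)) := by
  intro k
  induction k with
  | zero =>
      intro x y hx
      have hxy : x = y := by
        by_contra hne
        simp [kpow, hne] at hx
      exact ⟨fun _ => x, rfl, hxy, by omega⟩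
  | succ k ih =>
      intro x y hx
      have hex : ∃ z, 0 < P x z * kpow P k z y := by
        by_contra hno
        push_neg at hno
        have hle : ∑ z, P x z * kpow P k z y ≤ 0 := Finset.sum_nonpos fun z _ => hno z
        have : (0:ℝ) < ∑ z, P x z * kpow P k z y := hx
        linarith
      obtain ⟨z, hz⟩ := hex
      have h1 : 0 < P x z ∧ 0 < kpow P k z y := by
        rcases mul_pos_iff.mp hz with h | h
        · exact h
        · exact absurd h.1 (not_lt.mpr (hnn x z))
      obtain ⟨c, hc0, hck, hcs⟩ := ih z y h1.2
      refine ⟨fun i => if i = 0 then x else c (i - 1), by simp, by simp [hck], ?_⟩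
      intro i hi
      rcases Nat.eq_zero_or_pos i with rfl | hipos
      · simpa [hc0] using h1.1
      · have hi0 : i ≠ 0 := by omega
        have hi10 : i + 1 ≠ 0 := by omega
        simp only [hi0, hi10, if_false]
        have : i + 1 - 1 = (i - 1) + 1 := by omega
        rw [this]
        exact hcs (i - 1) (by omega)

lemma key_u {P : X → X → ℝ} {ν : X → ℝ} (hS : IsStochastic P ν) (h1 : Primitive P)
    (f : X → ℝ) :
    ∃ u : X → ℝ,
      (∀ x, Pop P u x = u x - (f x - ∑ y, f y * ν y)) ∧
      ((∑ x, f x ^ 2 * ν x) - (∑ x, f x * ν x) ^ 2 +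
          2 * ∑' n : ℕ, ((∑ x, f x * ((Pop P)^[n + 1] f) x * ν x) - (∑ x, f x * ν x) ^ 2)
        = ∑ x, (∑ x', P x x' * (u x' - Pop P u x) ^ 2) * ν x) ∧
      (∀ u' : X → ℝ, (∀ x, u' x - Pop P u' x = f x - ∑ y, f y * ν y) →
        ∀ x x', u x' - Pop P u x = u' x' - Pop P u' x) := by
  set m₀ : ℝ := ∑ y, f y * ν y with hm₀
  set ft : X → ℝ := fun x => f x - m₀ with hft
  have hft0 : ∑ x, ft x * ν x = 0 := by
    have : ∀ x, ft x * ν x = f x * ν x - m₀ * ν x := fun x => by simp [hft]; ring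
    rw [Finset.sum_congr rfl fun x _ => this x, Finset.sum_sub_distrib, ← Finset.mul_sum,
      hS.nuSum, ← hm₀]
    ring
  obtain ⟨a, hasum, habd⟩ := exists_summable_bound hS h1 ft hft0
  have hsump : ∀ x, Summable fun n => ((Pop P)^[n] ft) x := fun x =>
    Summable.of_abs (Summable.of_nonneg_of_le (fun n => abs_nonneg _) (fun n => habd n x) hasum)
  set u : X → ℝ := fun x => ∑' n, ((Pop P)^[n] ft) x with hu
  have hsump1 : ∀ x, Summable fun n => ((Pop P)^[n+1] ft) x := fun x =>
    (summable_nat_add_iff 1).mpr (hsump x)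
  have htail : ∀ x, ∑' n, ((Pop P)^[n+1] ft) x = u x - ft x := by
    intro x
    have h0 := Summable.tsum_eq_zero_add (hsump x)
    have h1' : ((Pop P)^[0] ft) x = ft x := rfl
    rw [h1'] at h0
    have : u x = ft x + ∑' n, ((Pop P)^[n+1] ft) x := h0
    linarith
  have hPu : ∀ x, Pop P u x = u x - ft x := by
    intro x
    calc Pop P u x = ∑ x', P x x' * ∑' n, ((Pop P)^[n] ft) x' := rfl
      _ = ∑ x', ∑' n, P x x' * ((Pop P)^[n] ft) x' :=
          Finset.sum_congr rfl fun x' _ => (tsum_mul_left).symm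
      _ = ∑' n, ∑ x', P x x' * ((Pop P)^[n] ft) x' :=
          (Summable.tsum_finsetSum fun x' _ => (hsump x').mul_left _).symm
      _ = ∑' n, ((Pop P)^[n+1] ft) x := by
          refine tsum_congr fun n => ?_
          rw [Function.iterate_succ_apply']
          rfl
      _ = u x - ft x := htail x
  have hfit : ∀ n, (Pop P)^[n] f = fun x => ((Pop P)^[n] ft) x + m₀ := by
    intro n
    induction n with
    | zero => funext x; simp [hft]
    | succ n ih =>
        funext x
        rw [Function.iterate_succ_apply', ih, Function.iterate_succ_apply']
        show ∑ x', P x x' * (((Pop P)^[n] ft) x' + m₀) = Pop P ((Pop P)^[n] ft) x + m₀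
        rw [show Pop P ((Pop P)^[n] ft) x = ∑ x', P x x' * ((Pop P)^[n] ft) x' from rfl]
        rw [show (∑ x', P x x' * (((Pop P)^[n] ft) x' + m₀))
            = ∑ x', (P x x' * ((Pop P)^[n] ft) x' + P x x' * m₀) from
          Finset.sum_congr rfl fun x' _ => by ring]
        rw [Finset.sum_add_distrib, ← Finset.sum_mul, hS.rowSum, one_mul]
  have hterm : ∀ n : ℕ, (∑ x, f x * ((Pop P)^[n+1] f) x * ν x) - m₀^2
      = ∑ x, ft x * ((Pop P)^[n+1] ft) x * ν x := by
    intro n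
    have hPft0 : ∑ x, ((Pop P)^[n+1] ft) x * ν x = 0 := by rw [nu_iter hS ft, hft0]
    have hexp : ∀ x, f x * ((Pop P)^[n+1] f) x * ν x = ft x * ((Pop P)^[n+1] ft) x * ν x
        + m₀ * (ft x * ν x) + m₀ * (((Pop P)^[n+1] ft) x * ν x) + m₀^2 * ν x := by
      intro x
      rw [hfit (n+1)]
      have hfx : f x = ft x + m₀ := by simp [hft]
      show f x * (((Pop P)^[n+1] ft) x + m₀) * ν x = _
      rw [hfx]; ring
    rw [Finset.sum_congr rfl fun x _ => hexp x]
    simp only [Finset.sum_add_distrib, ← Finset.mul_sum]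
    rw [hft0, hPft0, hS.nuSum]
    ring
  have hsq : (∑ x, f x^2 * ν x) - m₀^2 = ∑ x, ft x^2 * ν x := by
    have hexp : ∀ x, ft x ^ 2 * ν x = f x ^ 2 * ν x - 2 * m₀ * (f x * ν x) + m₀^2 * ν x := by
      intro x; simp only [hft]; ring
    rw [Finset.sum_congr rfl fun x _ => hexp x]
    simp only [Finset.sum_add_distrib, Finset.sum_sub_distrib, ← Finset.mul_sum]
    rw [hS.nuSum, ← hm₀]
    ring
  have htsum : ∑' n : ℕ, ((∑ x, f x * ((Pop P)^[n+1] f) x * ν x) - m₀^2)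
      = ∑ x, ft x * (u x - ft x) * ν x := by
    rw [tsum_congr hterm,
      Summable.tsum_finsetSum (fun x _ => (((hsump1 x).mul_left (ft x)).mul_right (ν x)))]
    refine Finset.sum_congr rfl fun x _ => ?_
    calc ∑' n : ℕ, ft x * ((Pop P)^[n+1] ft) x * ν x
        = (∑' n : ℕ, ft x * ((Pop P)^[n+1] ft) x) * ν x := tsum_mul_right
      _ = (ft x * ∑' n : ℕ, ((Pop P)^[n+1] ft) x) * ν x := by rw [tsum_mul_left]
      _ = ft x * (u x - ft x) * ν x := by rw [htail x]
  refine ⟨u, fun x => hPu x, ?_, ?_⟩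
  · rw [htsum, hsq]
    have step1 : ∑ x, ft x ^ 2 * ν x + 2 * ∑ x, ft x * (u x - ft x) * ν x
        = ∑ x, (u x ^ 2 - (Pop P u x) ^ 2) * ν x := by
      rw [Finset.mul_sum, ← Finset.sum_add_distrib]
      refine Finset.sum_congr rfl fun x _ => ?_
      rw [hPu x]
      ring
    rw [step1]
    have hinv := nu_Pop hS (fun y => u y ^ 2)
    have hvar : ∀ x, ∑ x', P x x' * (u x' - Pop P u x)^2
        = Pop P (fun y => u y ^ 2) x - (Pop P u x)^2 := by
      intro x
      have hexp : ∀ x', P x x' * (u x' - Pop P u x)^2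
          = P x x' * u x'^2 - 2 * Pop P u x * (P x x' * u x') + (Pop P u x)^2 * P x x' :=
        fun x' => by ring
      rw [Finset.sum_congr rfl fun x' _ => hexp x']
      rw [Finset.sum_add_distrib, Finset.sum_sub_distrib, ← Finset.mul_sum, ← Finset.mul_sum,
        hS.rowSum x, mul_one]
      rw [show (∑ x', P x x' * u x' ^ 2) = Pop P (fun y => u y ^ 2) x from rfl,
        show (∑ x', P x x' * u x') = Pop P u x from rfl]
      ring
    calc ∑ x, (u x ^ 2 - (Pop P u x) ^ 2) * ν x
        = ∑ x, u x ^ 2 * ν x - ∑ x, (Pop P u x)^2 * ν x := by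
          rw [← Finset.sum_sub_distrib]
          exact Finset.sum_congr rfl fun x _ => by ring
      _ = ∑ x, Pop P (fun y => u y ^ 2) x * ν x - ∑ x, (Pop P u x)^2 * ν x := by rw [hinv]
      _ = ∑ x, (Pop P (fun y => u y ^ 2) x - (Pop P u x)^2) * ν x := by
          rw [← Finset.sum_sub_distrib]
          exact Finset.sum_congr rfl fun x _ => by ring
      _ = ∑ x, (∑ x', P x x' * (u x' - Pop P u x) ^ 2) * ν x :=
          Finset.sum_congr rfl fun x _ => by rw [hvar x]
  · intro u' hu' x x'
    have hu'2 : ∀ y, u' y - Pop P u' y = ft y := fun y => hu' y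
    set w : X → ℝ := fun y => u y - u' y with hw
    have hPw : ∀ y, Pop P w y = w y := by
      intro y
      have hsplit : Pop P w y = Pop P u y - Pop P u' y := by
        rw [show Pop P w y = ∑ z, P y z * (u z - u' z) from rfl,
          show Pop P u y = ∑ z, P y z * u z from rfl,
          show Pop P u' y = ∑ z, P y z * u' z from rfl, ← Finset.sum_sub_distrib]
        exact Finset.sum_congr rfl fun z _ => by ring
      have h2 := hu'2 y
      have h3 := hPu y
      show Pop P w y = u y - u' y
      rw [hsplit, h3]
      linarith
    have hwc := harmonic_const hS h1 hPw
    have hPsplit : Pop P u x = Pop P u' x + Pop P w x := by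
      rw [show Pop P w x = ∑ z, P x z * (u z - u' z) from rfl,
        show Pop P u x = ∑ z, P x z * u z from rfl,
        show Pop P u' x = ∑ z, P x z * u' z from rfl, ← Finset.sum_add_distrib]
      exact Finset.sum_congr rfl fun z _ => by ring
    have e1 : w x' = u x' - u' x' := rfl
    have e2 : w x = u x - u' x := rfl
    have e3 : w x' = w x := hwc x' x
    have e4 := hPw x
    linarith
end DegAux

/-- Lemma 8.1: characterization of the degenerate case. -/
theorem degeneracy_characterization [Fintype X] [DecidableEq X] [Nonempty X]
    (P : X → X → ℝ) (ν f : X → ℝ) (hS : IsStochastic P ν) (h1 : Primitive P) :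
    ((∃ m : ℝ, ∀ (n : ℕ) (g : Fin (n + 1) → X),
        0 < ∏ i : Fin (n + 1), P (g i) (g (i + 1)) →
          (∑ i, f (g i)) = (n + 1 : ℝ) * m) ↔
      (∃ (m : ℝ) (h : X → ℝ), ∀ x x' : X,
        P x x' * f x' = P x x' * (h x - h x' + m))) ∧
    ((∃ (m : ℝ) (h : X → ℝ), ∀ x x' : X,
        P x x' * f x' = P x x' * (h x - h x' + m)) ↔
      ((∑ x, f x ^ 2 * ν x) - (∑ x, f x * ν x) ^ 2 +
          2 * ∑' n : ℕ,
            ((∑ x, f x * ((Pop P)^[n + 1] f) x * ν x) - (∑ x, f x * ν x) ^ 2) = 0)) := by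
  constructor
  · constructor
    · -- (A) → (B)
      rintro ⟨m, hm⟩
      have hcyc : ∀ (k : ℕ) (c : ℕ → X), 1 ≤ k → c k = c 0 →
          (∀ i < k, 0 < P (c i) (c (i + 1))) →
          ∑ i ∈ Finset.range k, f (c (i + 1)) = (k : ℝ) * m := by
        intro k c hk hclose hstep
        obtain ⟨n, rfl⟩ : ∃ n, k = n + 1 := ⟨k - 1, by omega⟩
        have hprod : 0 < ∏ i : Fin (n + 1), P (c ↑i) (c ↑(i + 1)) := by
          apply Finset.prod_pos
          intro i _
          rcases eq_or_ne i (Fin.last n) with rfl | hne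
          · have hv : ((Fin.last n + 1 : Fin (n + 1)) : ℕ) = 0 := by
              simp [Fin.val_add_one]
            rw [hv, ← hclose]
            simpa using hstep n (by omega)
          · have hv : ((i + 1 : Fin (n + 1)) : ℕ) = (i : ℕ) + 1 := by
              rw [Fin.val_add_one, if_neg hne]
            rw [hv]
            exact hstep i i.isLt
        have hsum := hm n (fun i => c ↑i) hprod
        rw [Fin.sum_univ_eq_sum_range (fun i => f (c i)) (n + 1)] at hsum
        have hshift : ∑ i ∈ Finset.range (n + 1), f (c i)
            = ∑ i ∈ Finset.range (n + 1), f (c (i + 1)) := by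
          rw [Finset.sum_range_succ' (fun i => f (c i)) n,
            Finset.sum_range_succ (fun i => f (c (i + 1))) n, hclose]
        rw [hshift] at hsum
        rw [hsum]
        push_cast
        ring
      obtain ⟨k₀, hk₁, hpos⟩ := h1
      have hchain : ∀ x y : X, ∃ c : ℕ → X, c 0 = x ∧ c k₀ = y ∧
          ∀ i < k₀, 0 < P (c i) (c (i + 1)) :=
        fun x y => exists_chain hS.nonneg k₀ x y (hpos x y)
      choose ch h0 hkk hst using fun y => hchain (Classical.arbitrary X) y
      choose rt r0 rk rst using fun y => hchain y (Classical.arbitrary X)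
      have hconcat : ∀ (k₁ : ℕ) (c1 : ℕ → X) (y : X), c1 0 = Classical.arbitrary X →
          c1 k₁ = y → (∀ i < k₁, 0 < P (c1 i) (c1 (i + 1))) →
          (∑ i ∈ Finset.range k₁, f (c1 (i + 1)))
            + (∑ i ∈ Finset.range k₀, f (rt y (i + 1))) = ((k₁ + k₀ : ℕ) : ℝ) * m := by
        intro k₁ c1 y hc10 hc1k hc1s
        set c : ℕ → X := fun i => if i < k₁ then c1 i else rt y (i - k₁) with hc
        have hcend : c (k₁ + k₀) = c 0 := by
          have h1' : c (k₁ + k₀) = rt y k₀ := by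
            simp only [hc]
            rw [if_neg (by omega)]
            congr 1
            omega
          have h2' : c 0 = Classical.arbitrary X := by
            simp only [hc]
            by_cases hcase : 0 < k₁
            · rw [if_pos hcase]; exact hc10
            · have hk10 : k₁ = 0 := by omega
              rw [if_neg (by omega)]
              have he0 : (0 : ℕ) - k₁ = 0 := by omega
              rw [he0, r0 y, ← hc1k, hk10, hc10]
          rw [h1', h2', rk y]
        have hcstep : ∀ i < k₁ + k₀, 0 < P (c i) (c (i + 1)) := by
          intro i hi
          by_cases hlt1 : i + 1 < k₁
          · simp only [hc]
            rw [if_pos (by omega), if_pos hlt1]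
            exact hc1s i (by omega)
          · by_cases hlt2 : i < k₁
            · have heq1 : i + 1 = k₁ := by omega
              simp only [hc]
              rw [if_pos hlt2, if_neg (by omega)]
              have e : rt y (i + 1 - k₁) = rt y 0 := by congr 1; omega
              rw [e, r0 y, ← hc1k, ← heq1]
              exact hc1s i (by omega)
            · simp only [hc]
              rw [if_neg hlt2, if_neg (by omega)]
              have e : i + 1 - k₁ = (i - k₁) + 1 := by omega
              rw [e]
              exact rst y (i - k₁) (by omega)
        have hcval := hcyc (k₁ + k₀) c (by omega) hcend hcstep
        rw [Finset.sum_range_add (fun i => f (c (i + 1))) k₁ k₀] at hcval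
        have p1 : ∀ i ∈ Finset.range k₁, f (c (i + 1)) = f (c1 (i + 1)) := by
          intro i hi
          simp only [Finset.mem_range] at hi
          simp only [hc]
          by_cases hcase : i + 1 < k₁
          · rw [if_pos hcase]
          · have heq1 : i + 1 = k₁ := by omega
            rw [if_neg (by omega)]
            have e : rt y (i + 1 - k₁) = rt y 0 := by congr 1; omega
            rw [e, r0 y, ← hc1k, heq1]
        have p2 : ∀ i ∈ Finset.range k₀, f (c (k₁ + i + 1)) = f (rt y (i + 1)) := by
          intro i hi
          simp only [hc]
          rw [if_neg (by omega)]
          congr 2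
          omega
        rw [Finset.sum_congr rfl p1] at hcval
        have p2' : ∑ i ∈ Finset.range k₀, f (c (k₁ + i + 1)) = ∑ i ∈ Finset.range k₀, f (rt y (i + 1)) :=
          Finset.sum_congr rfl p2
        rw [p2'] at hcval
        exact hcval
      refine ⟨m, fun y => (k₀ : ℝ) * m - ∑ i ∈ Finset.range k₀, f (ch y (i + 1)), ?_⟩
      intro x x'
      rcases eq_or_lt_of_le (hS.nonneg x x') with h0' | hp
      · rw [← h0', zero_mul, zero_mul]
      · have key : f x' = (∑ i ∈ Finset.range k₀, f (ch x' (i + 1)))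
            - (∑ i ∈ Finset.range k₀, f (ch x (i + 1))) + m := by
          set e : ℕ → X := fun i => if i ≤ k₀ then ch x i else x' with he
          have he0 : e 0 = Classical.arbitrary X := by
            simp only [he]
            rw [if_pos (Nat.zero_le k₀)]
            exact h0 x
          have hek : e (k₀ + 1) = x' := by
            simp only [he]
            rw [if_neg (by omega)]
          have hes : ∀ i < k₀ + 1, 0 < P (e i) (e (i + 1)) := by
            intro i hi
            by_cases hcase : i < k₀
            · simp only [he]
              rw [if_pos (by omega), if_pos (by omega)]
              exact hst x i hcase
            · have heq1 : i = k₀ := by omega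
              subst heq1
              simp only [he]
              rw [if_pos le_rfl, if_neg (by omega), hkk x]
              exact hp
          have hesum : ∑ i ∈ Finset.range (k₀ + 1), f (e (i + 1))
              = (∑ i ∈ Finset.range k₀, f (ch x (i + 1))) + f x' := by
            rw [Finset.sum_range_succ (fun i => f (e (i + 1))) k₀]
            congr 1
            · refine Finset.sum_congr rfl fun i hi => ?_
              simp only [Finset.mem_range] at hi
              simp only [he]
              rw [if_pos (by omega)]
            · rw [hek]
          have hA := hconcat (k₀ + 1) e x' he0 hek hes
          have hB := hconcat k₀ (ch x') x' (h0 x') (hkk x') (hst x')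
          rw [hesum] at hA
          push_cast at hA hB
          linarith
        rw [key]
        ring
    · -- (B) → (A)
      rintro ⟨m, h, he⟩
      refine ⟨m, fun n g hg => ?_⟩
      have hfac : ∀ i : Fin (n + 1), 0 < P (g i) (g (i + 1)) := by
        intro i
        have hne := Finset.prod_ne_zero_iff.mp (ne_of_gt hg) i (Finset.mem_univ i)
        exact lt_of_le_of_ne (hS.nonneg _ _) (Ne.symm hne)
      have hval : ∀ i : Fin (n + 1), f (g (i + 1)) = h (g i) - h (g (i + 1)) + m :=
        fun i => mul_left_cancel₀ (ne_of_gt (hfac i)) (he (g i) (g (i + 1)))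
      have hbij : Function.Bijective (fun i : Fin (n + 1) => i + 1) :=
        (Equiv.addRight (1 : Fin (n + 1))).bijective
      have hshift : ∑ i : Fin (n + 1), f (g (i + 1)) = ∑ i : Fin (n + 1), f (g i) :=
        Fintype.sum_bijective _ hbij _ _ (fun i => rfl)
      have hshift2 : ∑ i : Fin (n + 1), h (g (i + 1)) = ∑ i : Fin (n + 1), h (g i) :=
        Fintype.sum_bijective _ hbij _ _ (fun i => rfl)
      rw [← hshift, Finset.sum_congr rfl fun i _ => hval i]
      rw [Finset.sum_add_distrib, Finset.sum_sub_distrib, hshift2]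
      simp [Finset.sum_const, Finset.card_univ, mul_comm]
  · constructor
    · -- (B) → (C)
      rintro ⟨m, h, he⟩
      have hPf : ∀ x, Pop P f x = h x - Pop P h x + m := by
        intro x
        have hexp : ∀ x', P x x' * f x' = P x x' * h x - P x x' * h x' + P x x' * m := by
          intro x'; rw [he x x']; ring
        rw [show Pop P f x = ∑ x', P x x' * f x' from rfl,
          Finset.sum_congr rfl fun x' _ => hexp x',
          Finset.sum_add_distrib, Finset.sum_sub_distrib, ← Finset.sum_mul, ← Finset.sum_mul,
          hS.rowSum x, one_mul, one_mul,
          show (∑ x', P x x' * h x') = Pop P h x from rfl]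
      have hmeq : m = ∑ y, f y * ν y := by
        have h1' := nu_Pop hS f
        have h2' : ∑ x, Pop P f x * ν x
            = ∑ x, h x * ν x - ∑ x, Pop P h x * ν x + m := by
          calc ∑ x, Pop P f x * ν x
              = ∑ x, (h x * ν x - Pop P h x * ν x + m * ν x) :=
                Finset.sum_congr rfl fun x _ => by rw [hPf x]; ring
            _ = ∑ x, h x * ν x - ∑ x, Pop P h x * ν x + m := by
                rw [Finset.sum_add_distrib, Finset.sum_sub_distrib, ← Finset.mul_sum,
                  hS.nuSum, mul_one]
        have h3' := nu_Pop hS h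
        linarith
      subst hmeq
      obtain ⟨u, hPu, hsig, huniq⟩ := key_u hS h1 f
      have hsplit : ∀ x, Pop P (fun y => f y + h y) x = Pop P f x + Pop P h x := by
        intro x
        rw [show Pop P (fun y => f y + h y) x = ∑ x', P x x' * (f x' + h x') from rfl,
          show Pop P f x = ∑ x', P x x' * f x' from rfl,
          show Pop P h x = ∑ x', P x x' * h x' from rfl, ← Finset.sum_add_distrib]
        exact Finset.sum_congr rfl fun x' _ => by ring
      have hu' : ∀ x, (fun y => f y + h y) x - Pop P (fun y => f y + h y) x
          = f x - ∑ y, f y * ν y := by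
        intro x
        simp only []
        rw [hsplit x, hPf x]
        ring
      have hzero := huniq (fun y => f y + h y) hu'
      rw [hsig]
      apply Finset.sum_eq_zero
      intro x _
      have hinner : ∑ x', P x x' * (u x' - Pop P u x) ^ 2 = 0 := by
        apply Finset.sum_eq_zero
        intro x' _
        rcases eq_or_lt_of_le (hS.nonneg x x') with h0' | hp
        · rw [← h0', zero_mul]
        · have hval : f x' = h x - h x' + (∑ y, f y * ν y) :=
            mul_left_cancel₀ (ne_of_gt hp) (he x x')
          have hz := hzero x x'
          have hcross : (fun y => f y + h y) x' - Pop P (fun y => f y + h y) x = 0 := by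
            simp only []
            rw [hsplit x, hPf x, hval]
            ring
          rw [hz, hcross]
          simp
      rw [hinner, zero_mul]
    · -- (C) → (B)
      intro hC
      obtain ⟨u, hPu, hsig, -⟩ := key_u hS h1 f
      rw [hsig] at hC
      have houter := (Finset.sum_eq_zero_iff_of_nonneg
        (fun x _ => mul_nonneg (Finset.sum_nonneg fun x' _ =>
          mul_nonneg (hS.nonneg x x') (sq_nonneg _)) (hS.nuPos x).le)).mp hC
      have hterm0 : ∀ x x', P x x' * (u x' - Pop P u x) ^ 2 = 0 := by
        intro x x'
        have h1' := houter x (Finset.mem_univ x)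
        have h2' : ∑ x', P x x' * (u x' - Pop P u x) ^ 2 = 0 := by
          rcases mul_eq_zero.mp h1' with h | h
          · exact h
          · exact absurd h (ne_of_gt (hS.nuPos x))
        exact (Finset.sum_eq_zero_iff_of_nonneg (fun x' _ =>
          mul_nonneg (hS.nonneg x x') (sq_nonneg _))).mp h2' x' (Finset.mem_univ x')
      refine ⟨∑ y, f y * ν y, fun x => Pop P u x, ?_⟩
      intro x x'
      rcases eq_or_lt_of_le (hS.nonneg x x') with h0' | hp
      · rw [← h0', zero_mul, zero_mul]
      · have hzero : u x' - Pop P u x = 0 := by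
          rcases mul_eq_zero.mp (hterm0 x x') with h | h
          · exact absurd h (ne_of_gt hp)
          · exact sub_eq_zero.mp (by
              have := sq_eq_zero_iff.mp h
              linarith [this])
        congr 1
        have hftx : f x' = u x' - Pop P u x' + ∑ y, f y * ν y := by
          have := hPu x'; linarith
        rw [hftx]
        linarith


end CLLT
end
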